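/- arXiv:2004.12143 — 3 statements merged into one kernel-verified Lean document; each statement's English description precedes it below -/
import Mathlib

section
/- For every nonempty set O of OR+ nodes of an ad-AND/OR graph G all having the same color, the graph G/O admits at least one solution subtree; consequently, for an e-colored G, the set of equivalence classes of G/O is nonempty. -/
/-!
Framework: acyclic decomposable AND/OR graphs (ad-AND/OR graphs), solution
subtrees, e-colorings, the contraction `π`, equivalence classes, color tuples,
compatibility, and the order `≺` on node-colored rooted trees.
-/

/-- Finite node-colored rooted trees.  Children are stored as a list; the trees
representing equivalence classes are canonical: the children of every node are
sorted strictly increasingly by their root colors (which represents faithfully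
an unordered tree whose children have pairwise distinct colors). -/
inductive CTree (C : Type u) : Type u where
  | node : C → List (CTree C) → CTree C

namespace CTree

variable {C : Type*}

/-- The color of the root of a colored tree. -/
def rootColor : CTree C → C
  | node c _ => c

/-- The child subtrees of the root. -/
def children : CTree C → List (CTree C)
  | node _ ts => ts

/-- The tuple of colors of the children of the root (in stored order; for a
canonical tree this is the increasingly sorted tuple of the children colors). -/
def rootTuple (T : CTree C) : List C := T.children.map rootColor

/-- The order `≺` on (canonical) node-colored rooted trees: `T ≺ T'` if the root
color of `T` strictly precedes the one of `T'`; if the root colors are equal,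
`T ≺ T'` if the tuple of child subtrees of the root of `T` (sorted with respect
to `≺`, i.e. by root colors for canonical trees) is lexicographically smaller
than the corresponding tuple for `T'`, the empty tree being smaller than any
tree. -/
inductive Lt [LT C] : CTree C → CTree C → Prop where
  | color {c c' : C} {ts ts' : List (CTree C)} (h : c < c') :
      Lt (node c ts) (node c' ts')
  | children {c : C} {ts ts' : List (CTree C)} (h : List.Lex Lt ts ts') :
      Lt (node c ts) (node c ts')

/-- Canonical trees: at every node, the children are sorted strictly
increasingly with respect to their root colors (in particular the children of
every node have pairwise distinct colors). -/
inductive Canonical [LT C] : CTree C → Prop where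
  | node {c : C} {ts : List (CTree C)}
      (hsorted : ts.Chain' fun a b => a.rootColor < b.rootColor)
      (hrec : ∀ t ∈ ts, Canonical t) : Canonical (node c ts)

end CTree

/-- An acyclic decomposable AND/OR graph (ad-AND/OR graph) on a finite vertex
type `V`: the vertices are partitioned into AND nodes and OR⁺ nodes, the graph
is acyclic, every arc joins an AND node and an OR⁺ node, every AND node has
in-degree and out-degree at least one, and the graph is decomposable. -/
structure AndOrGraph (V : Type*) [Fintype V] : Type _ where
  /-- the arcs of the graph -/
  Adj : V → V → Prop
  /-- the AND nodes; the remaining nodes are the OR⁺ nodes -/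
  IsAnd : V → Prop
  /-- the graph is acyclic -/
  acyclic : ∀ v, ¬ Relation.TransGen Adj v v
  /-- every arc joins an AND node and an OR⁺ node (in either direction) -/
  bipartite : ∀ u v, Adj u v → (IsAnd u ↔ ¬ IsAnd v)
  /-- every AND node has in-degree at least one -/
  and_in : ∀ v, IsAnd v → ∃ u, Adj u v
  /-- every AND node has out-degree at least one -/
  and_out : ∀ v, IsAnd v → ∃ u, Adj v u
  /-- decomposability: the sets of nodes reachable from distinct out-neighbors
  of an AND node are pairwise disjoint -/
  decomposable : ∀ x u v, IsAnd x → Adj x u → Adj x v → u ≠ v →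
    ∀ w, Relation.ReflTransGen Adj u w → Relation.ReflTransGen Adj v w → False

namespace AndOrGraph

variable {V : Type*} [Fintype V] {C : Type*} [LinearOrder C]

/-- A goal node: a node of out-degree zero. -/
def IsGoal (G : AndOrGraph V) (v : V) : Prop := ∀ u, ¬ G.Adj v u

/-- A start node of `G`: an OR⁺ node of in-degree zero. -/
def IsStart (G : AndOrGraph V) (v : V) : Prop := ¬ G.IsAnd v ∧ ∀ u, ¬ G.Adj u v

/-- `G.IsSolutionSubtree O verts root`: the subgraph of `G` induced by the
vertex set `verts` is a solution subtree of `G/O` (the elements of `O` being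
regarded as the start nodes) with root `root`: it contains exactly one start
node `root`, every node of it is reachable from `root` within it, every OR node
of it (non-goal OR⁺ node) has exactly one of its `G`-out-neighbors in it and
every AND node of it has all of its `G`-out-neighbors in it. -/
structure IsSolutionSubtree (G : AndOrGraph V) (O : Set V) (verts : Set V)
    (root : V) : Prop where
  root_start : root ∈ O
  root_mem : root ∈ verts
  unique_start : ∀ v ∈ verts, v ∈ O → v = root
  reach : ∀ v ∈ verts,
    Relation.ReflTransGen (fun a b => G.Adj a b ∧ a ∈ verts ∧ b ∈ verts) root v
  or_choice : ∀ v ∈ verts, ¬ G.IsAnd v → ¬ G.IsGoal v → ∃! u, u ∈ verts ∧ G.Adj v u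
  and_all : ∀ v ∈ verts, G.IsAnd v → ∀ u, G.Adj v u → u ∈ verts

/-- An e-coloring of `G`: a coloring of the (OR⁺) nodes such that the
out-neighbors of every AND node have pairwise distinct colors. -/
def EColoring (G : AndOrGraph V) (col : V → C) : Prop :=
  ∀ x u u', G.IsAnd x → G.Adj x u → G.Adj x u' → col u = col u' → u = u'

/-- `PiAssign G col verts f`: the function `f` assigns to every OR⁺ node `v`
of the (solution sub)tree with vertex set `verts` the contraction `π` of the
subtree rooted at `v`: a leaf of the subtree is sent to a single node of its
color, and an OR node is joined directly to the children of its AND-child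
(the AND nodes are contracted), the child subtrees being listed sorted by
their root colors. -/
def PiAssign (G : AndOrGraph V) (col : V → C) (verts : Set V)
    (f : V → CTree C) : Prop :=
  ∀ v ∈ verts, ¬ G.IsAnd v →
    ((∀ u ∈ verts, ¬ G.Adj v u) → f v = CTree.node (col v) []) ∧
    (∀ x ∈ verts, G.Adj v x → G.IsAnd x →
      ∃ ts : List (CTree C),
        f v = CTree.node (col v) ts ∧
        (∀ u, G.Adj x u → f u ∈ ts) ∧
        (∀ t ∈ ts, ∃ u, G.Adj x u ∧ f u = t) ∧
        ts.Chain' fun a b => a.rootColor < b.rootColor)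

/-- `PiAt G col verts v T`: the contraction `π` of the (solution sub)tree with
vertex set `verts` rooted at the OR⁺ node `v` is the colored tree `T`. -/
def PiAt (G : AndOrGraph V) (col : V → C) (verts : Set V) (v : V)
    (T : CTree C) : Prop :=
  ∃ f, PiAssign G col verts f ∧ v ∈ verts ∧ f v = T

/-- `T` is an equivalence class of `G/O`: `T = π(T₁)` for some solution subtree
`T₁` of `G/O`. -/
def IsClass (G : AndOrGraph V) (col : V → C) (O : Set V) (T : CTree C) : Prop :=
  ∃ verts root, G.IsSolutionSubtree O verts root ∧ PiAt G col verts root T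

/-- `r(π⁻¹(T))`: the set of roots of the solution subtrees of `G/O` belonging
to the equivalence class `T`. -/
def classRoots (G : AndOrGraph V) (col : V → C) (O : Set V) (T : CTree C) :
    Set V :=
  {o | ∃ verts, G.IsSolutionSubtree O verts o ∧ PiAt G col verts o T}

/-- `IsColorTuple G col x t`: `t = C~(x)`, the tuple of the colors of the
out-neighbors of `x` sorted in increasing order. -/
def IsColorTuple (G : AndOrGraph V) (col : V → C) (x : V) (t : List C) : Prop :=
  t.Chain' (· < ·) ∧ ∀ ci, ci ∈ t ↔ ∃ u, G.Adj x u ∧ col u = ci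

/-- `t ∈ 𝒯(O)`: `t = C~(x)` for some AND out-neighbor `x` of a node of `O`. -/
def TupleOf (G : AndOrGraph V) (col : V → C) (O : Set V) (t : List C) : Prop :=
  ∃ o ∈ O, ∃ x, G.Adj o x ∧ G.IsAnd x ∧ IsColorTuple G col x t

/-- `Chʳ(O)`: the set of AND out-neighbors of `O` whose color tuple is `t`. -/
def ChTup (G : AndOrGraph V) (col : V → C) (O : Set V) (t : List C) : Set V :=
  {x | G.IsAnd x ∧ (∃ o ∈ O, G.Adj o x) ∧ IsColorTuple G col x t}

/-- `Cʳᵢ` (for `ci` the `i`-th color of the tuple `t = tᵣ`): the set of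
out-neighbors of color `ci` of the AND nodes of `Chʳ(O)`. -/
def grandChildren (G : AndOrGraph V) (col : V → C) (O : Set V) (t : List C)
    (ci : C) : Set V :=
  {u | ∃ x ∈ ChTup G col O t, G.Adj x u ∧ col u = ci}

/-- A node `o` is compatible with the trees `Ts = (T₁, …, T_k)` (with respect to
`O` and the color tuple `t = tᵣ = (c₁, …, c_j)`, `k ≤ j`): some AND node
`x ∈ Chʳ(O)` has `o` as an out-neighbor and, for every `i ≤ k`, has an
out-neighbor that is the root of a solution subtree of `G/Cʳᵢ` of class `Tᵢ`. -/
def Compatible (G : AndOrGraph V) (col : V → C) (O : Set V) (t : List C)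
    (Ts : List (CTree C)) (o : V) : Prop :=
  ∃ x ∈ ChTup G col O t, G.Adj x o ∧
    ∀ p ∈ Ts.zip t, ∃ u, G.Adj x u ∧
      u ∈ classRoots G col (grandChildren G col O t p.2) p.1

/-- `𝒪ᵢ ⊆ Cʳᵢ`: the set of nodes of `Cʳᵢ` (for `ci` the `i`-th color of `t`)
that are compatible with the trees `Ts = (T₁, …, T_{i-1})`. -/
def compatSet (G : AndOrGraph V) (col : V → C) (O : Set V) (t : List C)
    (Ts : List (CTree C)) (ci : C) : Set V :=
  {o | o ∈ grandChildren G col O t ci ∧ Compatible G col O t Ts o}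

end AndOrGraph

variable {V : Type*} [Fintype V] {C : Type*} [LinearOrder C]

open AndOrGraph CTree

/-!
Choose a start node `o ∈ O` from which no other node of `O` is reachable, and at every non-goal
OR node `v` an AND child `σ v` from which no other child of `v` is reachable. The nodes reachable
from `o` along arcs that leave OR nodes only through `σ` form a solution subtree: by
decomposability, two of its nodes joined by a path of `G` are joined by such a path, so `σ v` is
the only child of `v` inside it. The contraction `π` of a solution subtree is then computed by
well-founded recursion along the arcs.
-/

open Relation

namespace AndOrGraph

theorem wellFounded_swap_transGen_adj (G : AndOrGraph V) :
    WellFounded (Function.swap (TransGen G.Adj)) :=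
  haveI : IsTrans V (Function.swap (TransGen G.Adj)) := ⟨fun _ _ _ h₁ h₂ => h₂.trans h₁⟩
  haveI : Std.Irrefl (Function.swap (TransGen G.Adj)) := ⟨G.acyclic⟩
  Finite.wellFounded_of_trans_of_irrefl _

theorem exists_adj_forall_not_transGen (G : AndOrGraph V) {v : V} (hv : ¬ G.IsGoal v) :
    ∃ x, G.Adj v x ∧ ∀ u, G.Adj v u → ¬ TransGen G.Adj x u := by
  simp only [IsGoal, not_forall, not_not] at hv
  exact G.wellFounded_swap_transGen_adj.has_min {u | G.Adj v u} hv

def ChoiceAdj (G : AndOrGraph V) (σ : V → V) (a b : V) : Prop :=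
  G.Adj a b ∧ (G.IsAnd a ∨ b = σ a)

theorem reflTransGen_adj_of_choiceAdj {G : AndOrGraph V} {σ : V → V} {a b : V}
    (h : ReflTransGen (G.ChoiceAdj σ) a b) : ReflTransGen G.Adj a b :=
  ReflTransGen.mono (fun _ _ hab => hab.1) _ _ h

theorem reflTransGen_choiceAdj_of_reflTransGen_adj (G : AndOrGraph V) (σ : V → V) (s : V) :
    ∀ {a b}, ReflTransGen (G.ChoiceAdj σ) s a → ReflTransGen (G.ChoiceAdj σ) s b →
      ReflTransGen G.Adj a b → ReflTransGen (G.ChoiceAdj σ) a b := by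
  induction s using G.wellFounded_swap_transGen_adj.induction with
  | _ s ih =>
  intro a b hsa hsb hab
  rcases hsa.cases_head with rfl | ⟨s₁, hss₁, hs₁a⟩
  · exact hsb
  rcases hsb.cases_head with rfl | ⟨s₂, hss₂, hs₂b⟩
  · exact absurd (.head' hss₁.1 ((reflTransGen_adj_of_choiceAdj hs₁a).trans hab)) (G.acyclic s)
  by_cases h₁₂ : s₁ = s₂
  · subst h₁₂
    exact ih s₁ (.single hss₁.1) hs₁a hs₂b hab
  · have hs : G.IsAnd s := by
      by_contra hs
      exact h₁₂ ((hss₁.2.resolve_left hs).trans (hss₂.2.resolve_left hs).symm)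
    exact (G.decomposable s s₁ s₂ hs hss₁.1 hss₂.1 h₁₂ b
      ((reflTransGen_adj_of_choiceAdj hs₁a).trans hab) (reflTransGen_adj_of_choiceAdj hs₂b)).elim

theorem isSolutionSubtree_choiceAdj (G : AndOrGraph V) {σ : V → V}
    (hσ : ∀ v, ¬ G.IsGoal v → G.Adj v (σ v) ∧ ∀ u, G.Adj v u → ¬ TransGen G.Adj (σ v) u)
    {O : Set V} {root : V} (hroot : root ∈ O) (hmin : ∀ o ∈ O, ¬ TransGen G.Adj root o) :
    G.IsSolutionSubtree O {v | ReflTransGen (G.ChoiceAdj σ) root v} root where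
  root_start := hroot
  root_mem := .refl
  unique_start v hv hvO :=
    (reflTransGen_iff_eq_or_transGen.1 (reflTransGen_adj_of_choiceAdj hv)).resolve_right
      (hmin v hvO)
  reach v hv := by
    induction hv with
    | refl => exact .refl
    | tail hrb hbc ih => exact ih.tail ⟨hbc.1, hrb, hrb.tail hbc⟩
  or_choice v hv hvAnd hvGoal := by
    refine ⟨σ v, ⟨hv.tail ⟨(hσ v hvGoal).1, .inr rfl⟩, (hσ v hvGoal).1⟩, ?_⟩
    rintro u ⟨hu, hvu⟩
    rcases (G.reflTransGen_choiceAdj_of_reflTransGen_adj σ root hv hu (.single hvu)).cases_head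
      with rfl | ⟨w, hvw, hwu⟩
    · exact absurd (.single hvu) (G.acyclic v)
    obtain rfl : w = σ v := hvw.2.resolve_left hvAnd
    exact (reflTransGen_iff_eq_or_transGen.1 (reflTransGen_adj_of_choiceAdj hwu)).resolve_right
      ((hσ v hvGoal).2 u hvu)
  and_all v hv hvAnd u hvu := hv.tail ⟨hvu, .inl hvAnd⟩

theorem exists_isSolutionSubtree (G : AndOrGraph V) {O : Set V} (hO : O.Nonempty) :
    ∃ verts root, G.IsSolutionSubtree O verts root := by
  obtain ⟨root, hroot, hmin⟩ := G.wellFounded_swap_transGen_adj.has_min O hO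
  choose! σ hσ using fun v (hv : ¬ G.IsGoal v) => G.exists_adj_forall_not_transGen hv
  exact ⟨_, root, G.isSolutionSubtree_choiceAdj hσ hroot hmin⟩

end AndOrGraph

theorem List.isChain_lt_of_pairwise_le_of_nodup_map {α β : Type*} [PartialOrder β] {f : α → β}
    {l : List α} (hle : l.Pairwise fun a b => f a ≤ f b) (hnd : (l.map f).Nodup) :
    l.IsChain fun a b => f a < f b :=
  ((hle.and (List.pairwise_map.1 hnd)).imp fun h => lt_of_le_of_ne h.1 h.2).isChain

namespace CTree

def sortByRootColor (ts : List (CTree C)) : List (CTree C) :=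
  ts.insertionSort fun a b => a.rootColor ≤ b.rootColor

theorem perm_sortByRootColor (ts : List (CTree C)) : (sortByRootColor ts).Perm ts :=
  List.perm_insertionSort _ ts

theorem pairwise_sortByRootColor (ts : List (CTree C)) :
    (sortByRootColor ts).Pairwise fun a b => a.rootColor ≤ b.rootColor :=
  haveI : Std.Total fun a b : CTree C => a.rootColor ≤ b.rootColor := ⟨fun _ _ => le_total _ _⟩
  haveI : IsTrans (CTree C) fun a b => a.rootColor ≤ b.rootColor := ⟨fun _ _ _ => le_trans⟩
  List.pairwise_insertionSort _ ts

end CTree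

namespace AndOrGraph

open Classical in
/-- The contraction `π` of the subtree with vertex set `verts`, at each of its nodes. The branch
`¬ TransGen G.Adj v u` is never taken; it only makes the recursion well founded. -/
noncomputable def contraction (G : AndOrGraph V) (col : V → C) (verts : Set V) : V → CTree C :=
  G.wellFounded_swap_transGen_adj.fix fun v rec =>
    .node (col v) <|
      if h : ∃ x ∈ verts, G.Adj v x ∧ G.IsAnd x then
        sortByRootColor <| (Finset.univ.filter (G.Adj h.choose)).toList.map fun u =>
          if h' : TransGen G.Adj v u then rec u h' else .node (col u) []
      else []

open Classical in
theorem contraction_eq (G : AndOrGraph V) (col : V → C) (verts : Set V) (v : V) :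
    G.contraction col verts v =
      .node (col v)
        (if h : ∃ x ∈ verts, G.Adj v x ∧ G.IsAnd x then
          sortByRootColor <| (Finset.univ.filter (G.Adj h.choose)).toList.map fun u =>
            if TransGen G.Adj v u then G.contraction col verts u else .node (col u) []
        else []) := by
  rw [contraction, WellFounded.fix_eq]
  rfl

theorem rootColor_contraction (G : AndOrGraph V) (col : V → C) (verts : Set V) (v : V) :
    (G.contraction col verts v).rootColor = col v := by
  rw [contraction_eq]
  rfl

theorem piAssign_contraction (G : AndOrGraph V) {col : V → C} (hcol : G.EColoring col)
    {verts : Set V}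
    (hor : ∀ v ∈ verts, ¬ G.IsAnd v → ¬ G.IsGoal v → ∃! u, u ∈ verts ∧ G.Adj v u) :
    G.PiAssign col verts (G.contraction col verts) := by
  classical
  intro v hv hvAnd
  refine ⟨fun hleaf => ?_, fun x hx hvx hxAnd => ?_⟩
  · rw [contraction_eq, dif_neg fun ⟨x, hx, hvx, _⟩ => hleaf x hx hvx]
  have h : ∃ x ∈ verts, G.Adj v x ∧ G.IsAnd x := ⟨x, hx, hvx, hxAnd⟩
  have hchoose : h.choose = x := (hor v hv hvAnd fun hg => hg x hvx).unique
    ⟨h.choose_spec.1, h.choose_spec.2.1⟩ ⟨hx, hvx⟩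
  set l := (Finset.univ.filter (G.Adj x)).toList
  have hl : ∀ u, u ∈ l ↔ G.Adj x u := by simp [l]
  have hmap : l.map (fun u => if TransGen G.Adj v u then G.contraction col verts u
      else .node (col u) []) = l.map (G.contraction col verts) :=
    List.map_congr_left fun u hu => if_pos (.head hvx (.single ((hl u).1 hu)))
  have hperm := perm_sortByRootColor (l.map (G.contraction col verts))
  refine ⟨sortByRootColor (l.map (G.contraction col verts)), ?_, ?_, ?_, ?_⟩
  · rw [contraction_eq, dif_pos h, hchoose]
    exact congrArg (fun ts => CTree.node (col v) (sortByRootColor ts)) hmap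
  · intro u hxu
    exact hperm.mem_iff.2 (List.mem_map_of_mem ((hl u).2 hxu))
  · intro t ht
    obtain ⟨u, hu, rfl⟩ := List.mem_map.1 (hperm.subset ht)
    exact ⟨u, (hl u).1 hu, rfl⟩
  · refine List.isChain_lt_of_pairwise_le_of_nodup_map (pairwise_sortByRootColor _) ?_
    rw [(hperm.map rootColor).nodup_iff, List.map_map]
    refine List.Nodup.map_on (fun u hu u' hu' huu' => ?_) (Finset.nodup_toList _)
    exact hcol x u u' hxAnd ((hl u).1 hu) ((hl u').1 hu')
      (by simpa only [Function.comp, rootColor_contraction] using huu')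

end AndOrGraph

theorem statement2_general (G : AndOrGraph V) (col : V → C) (O : Set V)
    (hO : O.Nonempty) :
    (∃ verts root, G.IsSolutionSubtree O verts root) ∧
    (G.EColoring col → ∃ T : CTree C, G.IsClass col O T) := by
  obtain ⟨verts, root, hsub⟩ := G.exists_isSolutionSubtree hO
  refine ⟨⟨verts, root, hsub⟩, fun hcol => ?_⟩
  exact ⟨_, verts, root, hsub, _, G.piAssign_contraction hcol hsub.or_choice, hsub.root_mem, rfl⟩

/-- For every nonempty set `O` of OR⁺ nodes of an ad-AND/OR
graph `G`, all having the same color `c`, the graph `G/O` admits at least one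
solution subtree; consequently, for an e-colored `G`, the set of equivalence
classes of `G/O` is nonempty. -/
theorem statement2 (G : AndOrGraph V) (col : V → C) (O : Set V) (c : C)
    (hO : O.Nonempty) (hOr : ∀ o ∈ O, ¬ G.IsAnd o) (hc : ∀ o ∈ O, col o = c) :
    (∃ verts root, G.IsSolutionSubtree O verts root) ∧
    (G.EColoring col → ∃ T : CTree C, G.IsClass col O T) :=
  statement2_general G col O hO
end

section
/- The relation ≺, restricted to the set of finite node-colored rooted trees in which the children of every node have pairwise distinct colors, is a strict total order: it is irreflexive, transitive, and for any two distinct such trees T and T', exactly one of T ≺ T' and T' ≺ T holds. -/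
/-!
Irreflexivity, transitivity and totality of `≺` each follow by recursion on the tree from the
same property of `List.Lex`; as the recursion provides it only for the subtrees, the list
lemmas assume it only for the entries of the lists being compared.
-/

namespace List

variable {α : Type*} {r : α → α → Prop}

theorem lex_irrefl_of_mem : ∀ {l : List α}, (∀ a ∈ l, ¬ r a a) → ¬ Lex r l l
  | a :: _, hirr, .rel h => hirr a mem_cons_self h
  | _ :: _, hirr, .cons h => lex_irrefl_of_mem (fun b hb => hirr b (mem_cons_of_mem _ hb)) h

theorem lex_trans_of_mem : ∀ {l₁ l₂ l₃ : List α},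
    (∀ a ∈ l₁, ∀ b c, r a b → r b c → r a c) → Lex r l₁ l₂ → Lex r l₂ l₃ → Lex r l₁ l₃
  | _, _, _ :: _, _, .nil, _ => .nil
  | _, _, _, htr, .rel hab, .rel hbc => .rel (htr _ mem_cons_self _ _ hab hbc)
  | _, _, _, _, .rel hab, .cons _ => .rel hab
  | _, _, _, _, .cons _, .rel hbc => .rel hbc
  | _, _, _, htr, .cons h₁, .cons h₂ =>
    .cons (lex_trans_of_mem (fun a ha => htr a (mem_cons_of_mem _ ha)) h₁ h₂)

theorem lex_or_lex_of_ne_of_mem : ∀ {l₁ l₂ : List α},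
    (∀ a ∈ l₁, ∀ b, a ≠ b → r a b ∨ r b a) → l₁ ≠ l₂ → Lex r l₁ l₂ ∨ Lex r l₂ l₁
  | [], [], _, hne => absurd rfl hne
  | [], _ :: _, _, _ => .inl .nil
  | _ :: _, [], _, _ => .inr .nil
  | a :: l₁, b :: l₂, htot, hne => by
    by_cases hab : a = b
    · subst hab
      have hne' : l₁ ≠ l₂ := fun h => hne (h ▸ rfl)
      exact (lex_or_lex_of_ne_of_mem (fun x hx => htot x (mem_cons_of_mem a hx)) hne').imp
        .cons .cons
    · exact (htot a mem_cons_self b hab).imp .rel .rel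

end List

namespace CTree

section Preorder

variable {C : Type*} [Preorder C]

protected theorem lt_irrefl : ∀ T : CTree C, ¬ T.Lt T
  | node c _, .color h => _root_.lt_irrefl c h
  | _, .children h => List.lex_irrefl_of_mem (fun t _ => t.lt_irrefl) h

protected theorem lt_trans : ∀ {T T' T'' : CTree C}, T.Lt T' → T'.Lt T'' → T.Lt T''
  | _, _, _, .color h, .color h' => .color (h.trans h')
  | _, _, _, .color h, .children _ => .color h
  | _, _, _, .children _, .color h' => .color h'
  | _, _, _, .children h, .children h' =>
    .children (List.lex_trans_of_mem (fun t _ _ _ => CTree.lt_trans) h h')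

protected theorem lt_asymm {T T' : CTree C} (h : T.Lt T') : ¬ T'.Lt T :=
  fun h' => T.lt_irrefl (CTree.lt_trans h h')

end Preorder

protected theorem lt_or_lt_of_ne {C : Type*} [LinearOrder C] :
    ∀ {T T' : CTree C}, T ≠ T' → T.Lt T' ∨ T'.Lt T
  | node c ts, node c' ts', hne => by
    rcases lt_trichotomy c c' with h | rfl | h
    · exact .inl (.color h)
    · have hts : ts ≠ ts' := fun h => hne (h ▸ rfl)
      exact (List.lex_or_lex_of_ne_of_mem (fun t _ _ => CTree.lt_or_lt_of_ne) hts).imp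
        .children .children
    · exact .inr (.color h)

end CTree

variable {V : Type*} [Fintype V] {C : Type*} [LinearOrder C]

open AndOrGraph CTree

/-- The relation `≺`, restricted to the set of finite
node-colored rooted trees in which the children of every node have pairwise
distinct colors (represented canonically, children sorted by color), is a
strict total order: it is irreflexive, transitive, and for any two distinct
such trees `T` and `T'`, exactly one of `T ≺ T'` and `T' ≺ T` holds. -/
theorem statement3 :
    (∀ T : CTree C, T.Canonical → ¬ T.Lt T) ∧
    (∀ T T' T'' : CTree C, T.Canonical → T'.Canonical → T''.Canonical →
      T.Lt T' → T'.Lt T'' → T.Lt T'') ∧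
    (∀ T T' : CTree C, T.Canonical → T'.Canonical → T ≠ T' →
      (T.Lt T' ∧ ¬ T'.Lt T) ∨ (T'.Lt T ∧ ¬ T.Lt T')) :=
  ⟨fun T _ => T.lt_irrefl, fun _ _ _ _ _ _ => CTree.lt_trans,
    fun _ _ _ _ hne => (CTree.lt_or_lt_of_ne hne).imp
      (fun h => ⟨h, CTree.lt_asymm h⟩) (fun h => ⟨h, CTree.lt_asymm h⟩)⟩
end

section
/- Let G be an e-colored ad-AND/OR graph and let S_0,...,S_k be the partition of the start nodes of G into maximal sets of equally colored nodes (nodes in S_i all share one color, and distinct S_i have distinct colors). Then the set of equivalence classes of G is the union of the sets of equivalence classes of G/S_i for i = 0,...,k, and these k+1 sets are pairwise disjoint. -/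
variable {V : Type*} [Fintype V] {C : Type*} [LinearOrder C]

open AndOrGraph CTree

lemma rootColor_of_piAt (G : AndOrGraph V) (col : V → C) {verts : Set V}
    {v : V} {T : CTree C} (hv : ¬ G.IsAnd v)
    (h : PiAt G col verts v T) : T.rootColor = col v := by
  obtain ⟨f, hf, hvm, hfv⟩ := h
  have h2 := hf v hvm hv
  by_cases h0 : ∀ u ∈ verts, ¬ G.Adj v u
  · rw [← hfv, h2.1 h0]; rfl
  · push_neg at h0
    obtain ⟨x, hxm, hadj⟩ := h0
    have hand : G.IsAnd x := by
      by_contra hna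
      exact hv ((G.bipartite v x hadj).mpr hna)
    obtain ⟨ts, hts, -⟩ := h2.2 x hxm hadj hand
    rw [← hfv, hts]; rfl

lemma start_unique (G : AndOrGraph V) {verts : Set V} {root : V}
    (reach : ∀ v ∈ verts,
      Relation.ReflTransGen (fun a b => G.Adj a b ∧ a ∈ verts ∧ b ∈ verts) root v)
    {v : V} (hv : v ∈ verts) (hs : G.IsStart v) : v = root := by
  rcases (reach v hv).cases_tail with h | ⟨c, -, hc⟩
  · exact h
  · exact absurd hc.1 (hs.2 c)

/-- Let `G` be an e-colored ad-AND/OR graph and let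
`S 0, …, S k` be the partition of the start nodes of `G` into maximal sets of
equally colored nodes (the nodes of `S i` all have color `cs i`, and distinct
parts have distinct colors).  Then the set of equivalence classes of `G` is the
union of the sets of equivalence classes of `G/(S i)`, `i = 0, …, k`, and these
`k+1` sets are pairwise disjoint. -/
theorem statement14 (G : AndOrGraph V) (col : V → C) (hecol : G.EColoring col)
    (k : ℕ) (S : Fin (k + 1) → Set V) (cs : Fin (k + 1) → C)
    (hunion : ∀ v, G.IsStart v ↔ ∃ i, v ∈ S i)
    (hcols : ∀ i, ∀ v ∈ S i, col v = cs i)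
    (hdist : ∀ i j, i ≠ j → cs i ≠ cs j)
    (hne : ∀ i, (S i).Nonempty) :
    (∀ T : CTree C,
      G.IsClass col {v | G.IsStart v} T ↔ ∃ i, G.IsClass col (S i) T) ∧
    (∀ i j, i ≠ j →
      ∀ T : CTree C, G.IsClass col (S i) T → G.IsClass col (S j) T → False) := by
  have hsub : ∀ i, ∀ v ∈ S i, G.IsStart v := fun i v hv => (hunion v).mpr ⟨i, hv⟩
  constructor
  · intro T
    constructor
    · rintro ⟨verts, root, hsol, hpi⟩
      obtain ⟨i, hri⟩ := (hunion root).mp hsol.root_start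
      refine ⟨i, verts, root, ⟨hri, hsol.root_mem, ?_, hsol.reach,
        hsol.or_choice, hsol.and_all⟩, hpi⟩
      intro v hv hvi
      exact hsol.unique_start v hv (hsub i v hvi)
    · rintro ⟨i, verts, root, hsol, hpi⟩
      refine ⟨verts, root, ⟨hsub i root hsol.root_start, hsol.root_mem, ?_,
        hsol.reach, hsol.or_choice, hsol.and_all⟩, hpi⟩
      intro v hv hvs
      exact start_unique G hsol.reach hv hvs
  · rintro i j hij T ⟨v1, r1, hs1, hp1⟩ ⟨v2, r2, hs2, hp2⟩
    have h1 : T.rootColor = col r1 :=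
      rootColor_of_piAt G col (hsub i r1 hs1.root_start).1 hp1
    have h2 : T.rootColor = col r2 :=
      rootColor_of_piAt G col (hsub j r2 hs2.root_start).1 hp2
    apply hdist i j hij
    rw [← hcols i r1 hs1.root_start, ← hcols j r2 hs2.root_start, ← h1, ← h2]
end
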